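/- arXiv:1605.09589 — 3 statements merged into one kernel-verified Lean document; each statement's English description precedes it below -/
import Mathlib

section
/- Let G be a graph and D_G the digraph obtained from an acyclic orientation of G by the kernel-by-H-walks gadget construction for a looped digraph H containing colors red, green, blue with {green, blue} independent in H, loops at green and blue. If K is a kernel by H-walks of D_G, then for every vertex v of G exactly one vertex of the green k-cycle C_v belongs to K. -/
def IsHWalk {V C : Type*} (D : V → V → Prop) (AH : C → C → Prop) (c : V → V → C)
    (n : ℕ) (w : ℕ → V) : Prop :=
  (∀ i < n, D (w i) (w (i+1))) ∧
  ∀ i, 1 ≤ i → i < n → AH (c (w (i-1)) (w i)) (c (w i) (w (i+1)))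

def ReachesByH {V C : Type*} (D : V → V → Prop) (AH : C → C → Prop) (c : V → V → C)
    (u v : V) : Prop :=
  ∃ n w, 1 ≤ n ∧ w 0 = u ∧ w n = v ∧ IsHWalk D AH c n w

def IsKernelByH {V C : Type*} (D : V → V → Prop) (AH : C → C → Prop) (c : V → V → C)
    (K : Set V) : Prop :=
  (∀ u ∈ K, ∀ v ∈ K, u ≠ v → ¬ ReachesByH D AH c u v) ∧
  (∀ u, u ∉ K → ∃ v ∈ K, ReachesByH D AH c u v)

/-- Vertex set of the gadget digraph `D_G`: the green `k`-cycles `C_v` (`cyc`),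
the copies `F_v` of the kernel-free digraph `F` (`fv`), and the 4-cycle
vertices for each arc `(u,v)` and index `i` (`qx`, positions `0 = x`, `1 = y`,
`2 = z`, `3 = w`). -/
inductive GV (α β : Type*) (k : ℕ) where
  | cyc : α → ZMod k → GV α β k
  | fv : α → β → GV α β k
  | qx : α → α → ZMod k → Fin 4 → GV α β k

/-- Arcs of the gadget digraph `D_G`. -/
inductive GArc {α β : Type*} {k : ℕ} (O : α → α → Prop) (DF : β → β → Prop) :
    GV α β k → GV α β k → Prop where
  | cycArc (v : α) (i : ZMod k) : GArc O DF (.cyc v i) (.cyc v (i + 1))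
  | fArc (v : α) {b b' : β} : DF b b' → GArc O DF (.fv v b) (.fv v b')
  | fCyc (v : α) (b : β) (i : ZMod k) : GArc O DF (.fv v b) (.cyc v i)
  | q01 {u v : α} (h : O u v) (i : ZMod k) : GArc O DF (.qx u v i 0) (.qx u v i 1)
  | q12 {u v : α} (h : O u v) (i : ZMod k) : GArc O DF (.qx u v i 1) (.qx u v i 2)
  | q23 {u v : α} (h : O u v) (i : ZMod k) : GArc O DF (.qx u v i 2) (.qx u v i 3)
  | q30 {u v : α} (h : O u v) (i : ZMod k) : GArc O DF (.qx u v i 3) (.qx u v i 0)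
  | inQ {u v : α} (h : O u v) (i : ZMod k) : GArc O DF (.cyc u i) (.qx u v i 0)
  | outQ {u v : α} (h : O u v) (i : ZMod k) : GArc O DF (.qx u v i 3) (.cyc v i)

/-- Arc coloring of the gadget digraph `D_G`: arcs inside the cycles `C_v` and
from `F_v` to `C_v` are green, arcs of `F_v` keep their color from `F`, the
arcs of the 4-cycles alternate green/blue, and the connecting arcs
`(x_{ui}, x_{(u,v)i})`, `(w_{(u,v)i}, x_{vi})` are blue. -/
def GCol {α β C : Type*} {k : ℕ} (cF : β → β → C) (green blue : C) :
    GV α β k → GV α β k → C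
  | GV.qx _ _ _ _, GV.cyc _ _ => blue
  | _, GV.cyc _ _ => green
  | GV.fv _ b1, GV.fv _ b2 => cF b1 b2
  | _, GV.qx _ _ _ j => if j = 0 ∨ j = 2 then blue else green
  | _, _ => green

/-!
A kernel `K` by `H`-walks cannot contain two vertices of the green cycle `C_v`, since one reaches
the other along the cycle by a monochromatic walk. If `K` missed `C_v`, then `K ∩ F_v` would be a
kernel of `F_v ≅ F`: a walk leaving `F_v` must enter `C_v` by a green arc, and from `C_v` it can
only continue inside `C_v`, because the arcs towards the 4-cycles are blue and green is not
followed by blue in `H`. So absorbing walks from `F_v` either stay in `F_v` or end in `C_v`.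
-/

section Walks

variable {V W C : Type*} {D : V → V → Prop} {D' : W → W → Prop} {AH : C → C → Prop}
  {c : V → V → C} {c' : W → W → C}

theorem IsHWalk.map_of_mem {S : Set V} (f : V → W)
    (hD : ∀ x ∈ S, ∀ y ∈ S, D x y → D' (f x) (f y))
    (hc : ∀ x ∈ S, ∀ y ∈ S, c' (f x) (f y) = c x y)
    {n : ℕ} {w : ℕ → V} (hw : IsHWalk D AH c n w) (hS : ∀ m ≤ n, w m ∈ S) :
    IsHWalk D' AH c' n (f ∘ w) := by
  refine ⟨fun i hi => hD _ (hS i hi.le) _ (hS (i + 1) hi) (hw.1 i hi), fun i h1 h2 => ?_⟩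
  simp only [Function.comp_apply]
  rw [hc _ (hS _ (by omega)) _ (hS i h2.le), hc _ (hS i h2.le) _ (hS (i + 1) h2)]
  exact hw.2 i h1 h2

theorem ReachesByH.map (f : V → W) (hD : ∀ x y, D x y → D' (f x) (f y))
    (hc : ∀ x y, c' (f x) (f y) = c x y) {u v : V} (h : ReachesByH D AH c u v) :
    ReachesByH D' AH c' (f u) (f v) := by
  obtain ⟨n, w, hn, h0, hn', hw⟩ := h
  exact ⟨n, f ∘ w, hn, by simp [h0], by simp [hn'],
    hw.map_of_mem (S := Set.univ) f (fun x _ y _ => hD x y) (fun x _ y _ => hc x y)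
      (fun _ _ => trivial)⟩

end Walks

section Gadget

variable {α β C : Type*} {k : ℕ} {O : α → α → Prop} {DF : β → β → Prop} {AH : C → C → Prop}
  {cF : β → β → C} {green blue : C}

theorem gCol_cyc_qx_zero (v u u' : α) (i j : ZMod k) :
    GCol cF green blue (.cyc v i) (.qx u u' j 0 : GV α β k) = blue := by
  simp [GCol]

theorem reachesByH_cyc_cyc [NeZero k] (hloops : ∀ x, AH x x) (v : α) {i j : ZMod k}
    (hij : i ≠ j) :
    ReachesByH (GArc O DF) AH (GCol (α := α) cF green blue) (.cyc v i) (.cyc v j : GV α β k) := by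
  refine ⟨(j - i).val, fun m : ℕ => .cyc v (i + (m : ZMod k)), ?_, by simp, by simp, ?_,
    fun _ _ _ => hloops green⟩
  · exact Nat.one_le_iff_ne_zero.mpr ((ZMod.val_ne_zero _).mpr (sub_ne_zero.mpr hij.symm))
  · intro m _
    simpa [add_assoc] using GArc.cycArc (O := O) (DF := DF) v (i + (m : ZMod k))

-- The green incoming arc is what forbids leaving `C_v` towards a 4-cycle at the next step.
theorem IsHWalk.fv_trapped_aux (hgb : ¬ AH green blue) {v : α} {b : β} {n : ℕ}
    {w : ℕ → GV α β k} (hw : IsHWalk (GArc O DF) AH (GCol cF green blue) n w)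
    (h0 : w 0 = .fv v b) (m : ℕ) (hm : m ≤ n) :
    (∀ m' ≤ m, w m' ∈ Set.range (GV.fv v)) ∨
      (1 ≤ m ∧ (∃ j, w m = .cyc v j) ∧ GCol cF green blue (w (m - 1)) (w m) = green) := by
  induction m with
  | zero => exact .inl fun m' hm' => ⟨b, by rw [Nat.le_zero.mp hm', h0]⟩
  | succ m ih =>
    have harc := hw.1 m hm
    rcases ih (by omega) with hF | ⟨hm1, ⟨j, hj⟩, hgreen⟩
    · obtain ⟨b', hb'⟩ := hF m le_rfl
      rw [← hb'] at harc
      generalize hx : w (m + 1) = x at harc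
      cases harc with
      | fArc _ _ =>
        exact .inl fun m' hm' => (Nat.le_succ_iff.mp hm').elim (hF m') (by rintro rfl; simp [hx])
      | fCyc _ _ i => exact .inr ⟨by omega, ⟨i, rfl⟩, by simp [← hb', GCol]⟩
    · rw [hj] at harc
      have hAH := hw.2 m hm1 hm
      rw [hgreen, hj] at hAH
      generalize hx : w (m + 1) = x at harc hAH
      cases harc with
      | cycArc => exact .inr ⟨by omega, ⟨j + 1, rfl⟩, by simp [hj, GCol]⟩
      | inQ => exact absurd (by rwa [gCol_cyc_qx_zero] at hAH) hgb

theorem IsHWalk.fv_trapped (hgb : ¬ AH green blue) {v : α} {b : β} {n : ℕ}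
    {w : ℕ → GV α β k} (hw : IsHWalk (GArc O DF) AH (GCol cF green blue) n w)
    (h0 : w 0 = .fv v b) :
    (∀ m ≤ n, w m ∈ Set.range (GV.fv v)) ∨ ∃ j, w n = .cyc v j :=
  (hw.fv_trapped_aux hgb h0 n le_rfl).imp_right fun h => h.2.1

theorem IsKernelByH.subsingleton_cyc [NeZero k] (hloops : ∀ x, AH x x) {K : Set (GV α β k)}
    (hK : IsKernelByH (GArc O DF) AH (GCol cF green blue) K) (v : α) :
    {i : ZMod k | .cyc v i ∈ K}.Subsingleton := by
  intro i hi j hj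
  by_contra hij
  exact hK.1 _ hi _ hj (by simpa using hij) (reachesByH_cyc_cyc hloops v hij)

theorem IsKernelByH.preimage_fv (hgb : ¬ AH green blue) {K : Set (GV α β k)}
    (hK : IsKernelByH (GArc O DF) AH (GCol cF green blue) K) {v : α}
    (hv : ∀ i, .cyc v i ∉ K) :
    IsKernelByH DF AH cF (GV.fv v ⁻¹' K) := by
  refine ⟨fun b₁ hb₁ b₂ hb₂ hne hreach => ?_, fun b hb => ?_⟩
  · exact hK.1 _ hb₁ _ hb₂ (by simpa using hne)
      (hreach.map (GV.fv v) (fun _ _ => GArc.fArc v) fun _ _ => rfl)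
  · obtain ⟨z, hz, n, w, hn, h0, hwn, hw⟩ := hK.2 (.fv v b) hb
    rcases hw.fv_trapped hgb h0 with hF | ⟨j, hj⟩
    · let proj : GV α β k → β := fun | .fv _ b' => b' | _ => b
      obtain ⟨b', hb'⟩ := hF n le_rfl
      have hproj : IsHWalk DF AH cF n (proj ∘ w) := by
        refine hw.map_of_mem proj ?_ ?_ hF
        · rintro _ ⟨x, rfl⟩ _ ⟨y, rfl⟩ hxy
          cases hxy with
          | fArc _ h => exact h
        · rintro _ ⟨x, rfl⟩ _ ⟨y, rfl⟩
          rfl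
      refine ⟨b', by simpa [hb', hwn] using hz, n, proj ∘ w, hn, by simp [h0, proj], ?_, hproj⟩
      simp [← hb', proj]
    · exact absurd (hj ▸ hwn ▸ hz) (hv j)

end Gadget

theorem stmt14_general {α β C : Type*} (k : ℕ) (hk : 3 ≤ k)
    (AH : C → C → Prop) (green blue : C)
    (hloops : ∀ x : C, AH x x)
    (hgb : ¬ AH green blue)
    (O : α → α → Prop)
    (DF : β → β → Prop) (cF : β → β → C)
    (hF : ¬ ∃ K : Set β, IsKernelByH DF AH cF K)
    (K : Set (GV α β k))
    (hK : IsKernelByH (GArc O DF) AH (GCol cF green blue) K) :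
    ∀ v : α, ∃! i : ZMod k, GV.cyc v i ∈ K := by
  intro v
  have : NeZero k := ⟨by omega⟩
  have hex : ∃ i : ZMod k, GV.cyc v i ∈ K := by
    by_contra! hv
    exact hF ⟨_, hK.preimage_fv hgb hv⟩
  obtain ⟨i, hi⟩ := hex
  exact ⟨i, hi, fun j hj => hK.subsingleton_cyc hloops v hj hi⟩

theorem stmt14 {α β C : Type*} [Fintype α] (k : ℕ) (hk : 3 ≤ k)
    (AH : C → C → Prop) (green blue : C)
    (hloops : ∀ x : C, AH x x)
    (hgb : ¬ AH green blue) (hbg : ¬ AH blue green)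
    (O : α → α → Prop) (hacyc : ∀ a : α, ¬ Relation.TransGen O a a)
    (DF : β → β → Prop) (hFloopless : ∀ b : β, ¬ DF b b) (cF : β → β → C)
    (hF : ¬ ∃ K : Set β, IsKernelByH DF AH cF K)
    (K : Set (GV α β k))
    (hK : IsKernelByH (GArc O DF) AH (GCol cF green blue) K) :
    ∀ v : α, ∃! i : ZMod k, GV.cyc v i ∈ K :=
  stmt14_general k hk AH green blue hloops hgb O DF cF hF K hK
end

section
/- With D_G as in the gadget construction: if K is a kernel by H-walks of D_G and (u,v) is an arc of the acyclic orientation →G, then x_{ui} ∈ K implies x_{vi} ∉ K (for each 1 ≤ i ≤ k). -/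
/-!
Suppose `x_{ui}, x_{vi} ∈ K`. In `Q_{(u,v)i}` the vertices `x` and `z` have the single
out-neighbours `y` and `w`, reached by green arcs, while every arc leaving `y` or `w` is blue.
As green is not followed by blue in `H`, every `H`-walk from `x_{(u,v)i}` ends at `y_{(u,v)i}`
and every `H`-walk from `z_{(u,v)i}` ends at `w_{(u,v)i}`. Independence and absorbency then force
`x_{(u,v)i} ∉ K`, `y_{(u,v)i} ∈ K`, `z_{(u,v)i} ∉ K`, `w_{(u,v)i} ∈ K`, and the arc
`(w_{(u,v)i}, x_{vi})` contradicts independence.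
-/

section HWalks

variable {V C : Type*} {D : V → V → Prop} {AH : C → C → Prop} {c : V → V → C}

lemma ReachesByH.of_adj {a b : V} (h : D a b) : ReachesByH D AH c a b := by
  refine ⟨1, fun n => if n = 0 then a else b, le_rfl, by simp, by simp, ?_, ?_⟩
  · intro i hi
    interval_cases i
    simpa using h
  · intro i h1 h2
    omega

lemma ReachesByH.eq_of_forced {s b t : V} (hs : ∀ t, D s t → t = b)
    (hstop : ∀ t, D b t → ¬ AH (c s b) (c b t)) (h : ReachesByH D AH c s t) : t = b := by
  obtain ⟨n, w, hn, hw0, hwn, harc, hcol⟩ := h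
  have hw1 : w 1 = b := hs _ (hw0 ▸ harc 0 hn)
  rcases hn.eq_or_lt with rfl | hlt
  · rw [← hwn, hw1]
  · have hcol1 := hcol 1 le_rfl hlt
    rw [Nat.sub_self, hw0, hw1] at hcol1
    exact absurd hcol1 (hstop _ (hw1 ▸ harc 1 hlt))

lemma IsKernelByH.notMem_of_reaches {K : Set V} (hK : IsKernelByH D AH c K) {a b : V}
    (ha : a ∈ K) (hab : a ≠ b) (h : ReachesByH D AH c a b) : b ∉ K :=
  fun hb => hK.1 a ha b hb hab h

lemma IsKernelByH.mem_of_forced_succ {K : Set V} (hK : IsKernelByH D AH c K) {a s b : V}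
    (ha : a ∈ K) (has : D a s) (hne : a ≠ s) (hforced : ∀ t, ReachesByH D AH c s t → t = b) :
    b ∈ K := by
  obtain ⟨t, htK, hst⟩ := hK.2 s (hK.notMem_of_reaches ha hne (.of_adj has))
  exact hforced t hst ▸ htK

end HWalks

section Gadget

variable {α β C : Type*} {k : ℕ} {AH : C → C → Prop} {green blue : C} {O : α → α → Prop}
  {DF : β → β → Prop} {cF : β → β → C}

lemma eq_qx_one_of_reachesByH_qx_zero (hgb : ¬ AH green blue) {u v : α} {i : ZMod k}
    {t : GV α β k} (h : ReachesByH (GArc O DF) AH (GCol cF green blue) (.qx u v i 0) t) :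
    t = .qx u v i 1 := by
  refine h.eq_of_forced (fun t' ht' => ?_) (fun t' ht' => ?_)
  · cases ht'; rfl
  · cases ht'
    simpa [GCol] using hgb

lemma eq_qx_three_of_reachesByH_qx_two (hgb : ¬ AH green blue) {u v : α} {i : ZMod k}
    {t : GV α β k} (h : ReachesByH (GArc O DF) AH (GCol cF green blue) (.qx u v i 2) t) :
    t = .qx u v i 3 := by
  refine h.eq_of_forced (fun t' ht' => ?_) (fun t' ht' => ?_)
  · cases ht'; rfl
  · cases ht' <;> simpa [GCol] using hgb

end Gadget

theorem stmt15_general {α β C : Type*} (k : ℕ)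
    (AH : C → C → Prop) (green blue : C)
    (hgb : ¬ AH green blue)
    (O : α → α → Prop)
    (DF : β → β → Prop) (cF : β → β → C)
    (K : Set (GV α β k))
    (hK : IsKernelByH (GArc O DF) AH (GCol cF green blue) K) :
    ∀ u v : α, O u v → ∀ i : ZMod k, GV.cyc u i ∈ K → GV.cyc v i ∉ K := by
  intro u v huv i hu
  have hy : GV.qx u v i 1 ∈ K :=
    hK.mem_of_forced_succ hu (.inQ huv i) (by simp) fun _ => eq_qx_one_of_reachesByH_qx_zero hgb
  have hw : GV.qx u v i 3 ∈ K :=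
    hK.mem_of_forced_succ hy (.q12 huv i) (by simp) fun _ => eq_qx_three_of_reachesByH_qx_two hgb
  exact hK.notMem_of_reaches hw (by simp) (.of_adj (.outQ huv i))

theorem stmt15 {α β C : Type*} [Fintype α] (k : ℕ) (hk : 3 ≤ k)
    (AH : C → C → Prop) (green blue : C)
    (hloops : ∀ x : C, AH x x)
    (hgb : ¬ AH green blue) (hbg : ¬ AH blue green)
    (O : α → α → Prop) (hacyc : ∀ a : α, ¬ Relation.TransGen O a a)
    (DF : β → β → Prop) (hFloopless : ∀ b : β, ¬ DF b b) (cF : β → β → C)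
    (hF : ¬ ∃ K : Set β, IsKernelByH DF AH cF K)
    (K : Set (GV α β k))
    (hK : IsKernelByH (GArc O DF) AH (GCol cF green blue) K) :
    ∀ u v : α, O u v → ∀ i : ZMod k, GV.cyc u i ∈ K → GV.cyc v i ∉ K :=
  stmt15_general k AH green blue hgb O DF cF K hK
end

section
/- Let H be a looped digraph with three vertices red, green, blue such that (red, green) ∈ A(H), (green, red) ∉ A(H), and (red, blue) ∉ A(H). Let D be a loopless digraph and construct D' by subdividing each arc (x,y) of D with a new vertex v_{(x,y)} and adding a new vertex v'_{(x,y)} with arc (v_{(x,y)}, v'_{(x,y)}); color (x, v_{(x,y)}) red, (v_{(x,y)}, y) green, and (v_{(x,y)}, v'_{(x,y)}) blue. Then for every original vertex x of D, the set of vertices reached from x by H-walks in D' is exactly N_D^+(x) ∪ { v_{(x,y)} : y ∈ N_D^+(x) }. -/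
/-- Vertex set of the subdivided digraph `D'`: original vertices, the
subdivision vertices `v_{(x,y)}` (`mid`) and the pendant vertices
`v'_{(x,y)}` (`pend`). -/
inductive SV (V : Type*) where
  | orig : V → SV V
  | mid : V → V → SV V
  | pend : V → V → SV V

/-- Arcs of `D'`: for each arc `(x,y)` of `D`, the arcs
`(x, v_{(x,y)})`, `(v_{(x,y)}, y)` and `(v_{(x,y)}, v'_{(x,y)})`. -/
inductive SArc {V : Type*} (D : V → V → Prop) : SV V → SV V → Prop where
  | toMid {x y : V} : D x y → SArc D (.orig x) (.mid x y)
  | fromMid {x y : V} : D x y → SArc D (.mid x y) (.orig y)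
  | toPend {x y : V} : D x y → SArc D (.mid x y) (.pend x y)

/-- Coloring of `D'`: `(x, v_{(x,y)})` is red, `(v_{(x,y)}, y)` is green and
`(v_{(x,y)}, v'_{(x,y)})` is blue. -/
def SCol {V C : Type*} (red green blue : C) : SV V → SV V → C
  | SV.mid _ _, SV.orig _ => green
  | SV.mid _ _, SV.pend _ _ => blue
  | _, _ => red

section HWalk

variable {V C : Type*} {D : V → V → Prop} {AH : C → C → Prop} {c : V → V → C}

lemma reachesByH_of_adj {u v : V} (huv : D u v) : ReachesByH D AH c u v := by
  refine ⟨1, fun i => if i = 0 then u else v, le_rfl, rfl, rfl, fun i hi => ?_, fun i _ _ => ?_⟩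
  · obtain rfl : i = 0 := by omega
    simpa using huv
  · omega

lemma reachesByH_of_adj_of_adj {u v w : V} (huv : D u v) (hvw : D v w)
    (hH : AH (c u v) (c v w)) : ReachesByH D AH c u w := by
  refine ⟨2, fun i => if i = 0 then u else if i = 1 then v else w, one_le_two, rfl, rfl,
    fun i hi => ?_, fun i _ _ => ?_⟩
  · interval_cases i <;> simpa
  · obtain rfl : i = 1 := by omega
    simpa using hH

end HWalk

namespace SArc

variable {V : Type*} {D : V → V → Prop}

lemma exists_of_orig_left {x : V} {z : SV V} (h : SArc D (.orig x) z) :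
    ∃ y, D x y ∧ z = .mid x y := by
  cases h with
  | toMid hxy => exact ⟨_, hxy, rfl⟩

lemma eq_of_mid_left {x y : V} {z : SV V} (h : SArc D (.mid x y) z) :
    z = .orig y ∨ z = .pend x y := by
  cases h with
  | fromMid _ => exact .inl rfl
  | toPend _ => exact .inr rfl

end SArc

lemma exists_adj_of_reachesByH_orig {V C : Type*} {D : V → V → Prop} {AH : C → C → Prop}
    {red green blue : C} (hgr : ¬ AH green red) (hrb : ¬ AH red blue) {x : V} {z : SV V}
    (hxz : ReachesByH (SArc D) AH (SCol red green blue) (.orig x) z) :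
    (∃ y, D x y ∧ z = .orig y) ∨ (∃ y, D x y ∧ z = .mid x y) := by
  obtain ⟨n, w, hn, hw₀, hwn, harc, hH⟩ := hxz
  obtain ⟨y, hxy, hw₁⟩ := SArc.exists_of_orig_left (hw₀ ▸ harc 0 hn)
  obtain rfl | hn₂ : n = 1 ∨ 2 ≤ n := by omega
  · exact .inr ⟨y, hxy, hwn ▸ hw₁⟩
  have hw₂ : w 2 = .orig y := by
    refine (SArc.eq_of_mid_left (hw₁ ▸ harc 1 hn₂)).resolve_right fun hw₂ => hrb ?_
    simpa [hw₀, hw₁, hw₂, SCol] using hH 1 le_rfl hn₂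
  obtain rfl | hn₃ : n = 2 ∨ 3 ≤ n := by omega
  · exact .inl ⟨y, hxy, hwn ▸ hw₂⟩
  obtain ⟨z, -, hw₃⟩ := SArc.exists_of_orig_left (hw₂ ▸ harc 2 hn₃)
  exact absurd (by simpa [hw₁, hw₂, hw₃, SCol] using hH 2 (by omega) hn₃) hgr

theorem stmt17_general {V C : Type*} (D : V → V → Prop)
    (AH : C → C → Prop) (red green blue : C)
    (hrg : AH red green) (hgr : ¬ AH green red) (hrb : ¬ AH red blue) :
    ∀ (x : V) (w : SV V),
      ReachesByH (SArc D) AH (SCol red green blue) (SV.orig x) w ↔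
        ((∃ y, D x y ∧ w = SV.orig y) ∨ (∃ y, D x y ∧ w = SV.mid x y)) := by
  intro x w
  refine ⟨exists_adj_of_reachesByH_orig hgr hrb, ?_⟩
  rintro (⟨y, hxy, rfl⟩ | ⟨y, hxy, rfl⟩)
  · exact reachesByH_of_adj_of_adj (.toMid hxy) (.fromMid hxy) hrg
  · exact reachesByH_of_adj (.toMid hxy)

theorem stmt17 {V C : Type*} (D : V → V → Prop) (hloopless : ∀ v : V, ¬ D v v)
    (AH : C → C → Prop) (red green blue : C)
    (hloops : ∀ x : C, AH x x)
    (hrg : AH red green) (hgr : ¬ AH green red) (hrb : ¬ AH red blue) :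
    ∀ (x : V) (w : SV V),
      ReachesByH (SArc D) AH (SCol red green blue) (SV.orig x) w ↔
        ((∃ y, D x y ∧ w = SV.orig y) ∨ (∃ y, D x y ∧ w = SV.mid x y)) :=
  stmt17_general D AH red green blue hrg hgr hrb
end
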